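/- arXiv:1502.03520 — 4 statements merged into one kernel-verified Lean document; each statement's English description precedes it below -/
import Mathlib

section
/- Let V be a real n × d matrix of rank d (with d ≤ n) with singular value decomposition V = P Σ Qᵀ, where P is n × d with orthonormal columns P_1, …, P_d, Q is a d × d orthogonal matrix, and Σ = diag(σ_1, …, σ_d) with σ_1 ≥ … ≥ σ_d > 0. Let ζ ∈ ℝ^n, and let c₁, c₂ > 0 be constants. Assume: (i) σ_d ≥ c₁·‖V‖_F/√d; (ii) ‖V‖_F² ≥ n·d; and (iii) |⟨P_i, ζ⟩| ≤ c₂·‖ζ‖₂/√n for every i = 1, …, d. Let V† = Q Σ⁻¹ Pᵀ be the Moore–Penrose pseudo-inverse of V and set ζ̄ = V† ζ. Then ‖ζ̄‖₂ ≤ (c₂/c₁)·(√d/n)·‖ζ‖₂. -/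
/-!
Since `Q` is orthogonal, `‖V† ζ‖₂` is the Euclidean norm of the vector with entries
`⟨P_i, ζ⟩ / σ_i`. Hypotheses (i) and (ii) give `σ_i ≥ σ_d ≥ c₁ ‖V‖_F / √d ≥ c₁ √n`, and (iii)
bounds each numerator by `c₂ ‖ζ‖₂ / √n`; so each of the `d` entries is at most
`c₂ ‖ζ‖₂ / (c₁ n)` in absolute value.
-/

open Matrix

variable {m k l : Type*} [Fintype k]

theorem Matrix.mul_diagonal_mul_transpose_mulVec [Fintype l] [DecidableEq k] (Q : Matrix m k ℝ)
    (w : k → ℝ) (P : Matrix l k ℝ) (ζ : l → ℝ) :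
    (Q * diagonal w * Pᵀ) *ᵥ ζ = Q *ᵥ fun i => w i * ∑ j, P j i * ζ j := by
  rw [← mulVec_mulVec, ← mulVec_mulVec]
  congr 1
  ext i
  rw [mulVec_diagonal]
  rfl

theorem Matrix.sum_sq_mulVec_of_transpose_mul_self [Fintype m] [DecidableEq k]
    (Q : Matrix m k ℝ) (hQ : Qᵀ * Q = 1) (u : k → ℝ) : ∑ i, (Q *ᵥ u) i ^ 2 = ∑ i, u i ^ 2 := by
  have hQu : (Q *ᵥ u) ᵥ* Q = u := by
    rw [← mulVec_transpose, mulVec_mulVec, hQ, one_mulVec]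
  simpa only [dotProduct, sq, dotProduct_mulVec, hQu] using
    (dotProduct_mulVec (Q *ᵥ u) Q u)

theorem Real.sqrt_sum_sq_le_sqrt_card_mul {ι : Type*} [Fintype ι] (u : ι → ℝ) {B : ℝ}
    (hB : 0 ≤ B) (hu : ∀ i, |u i| ≤ B) :
    √(∑ i, u i ^ 2) ≤ √(Fintype.card ι) * B := by
  have hsum : ∑ i, u i ^ 2 ≤ Fintype.card ι * B ^ 2 := by
    calc ∑ i, u i ^ 2 ≤ ∑ _i : ι, B ^ 2 :=
          Finset.sum_le_sum fun i _ => sq_le_sq' (abs_le.1 (hu i)).1 (abs_le.1 (hu i)).2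
      _ = Fintype.card ι * B ^ 2 := by simp
  calc √(∑ i, u i ^ 2) ≤ √(Fintype.card ι * B ^ 2) := Real.sqrt_le_sqrt hsum
    _ = √(Fintype.card ι) * B := by rw [Real.sqrt_mul (by positivity), Real.sqrt_sq hB]

/-- Theorem 4.1 (Noise reduction). `V = P Σ Qᵀ` is the SVD of the rank-`d`
word-vector matrix `V` (`P` has orthonormal columns, `Q` is orthogonal,
`σ` are the singular values in decreasing order). Under the isotropy
hypotheses (i) `σ_d ≥ c₁ ‖V‖_F / √d`, (ii) `‖V‖_F² ≥ n d`, and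
(iii) `|⟨P_i, ζ⟩| ≤ c₂ ‖ζ‖₂ / √n` for every left singular vector `P_i`,
the pseudo-inverse solution `ζ̄ = V† ζ` satisfies
`‖ζ̄‖₂ ≤ (c₂/c₁) (√d / n) ‖ζ‖₂`. -/
theorem stmt5 (n d : ℕ) (hd : 0 < d) (hdn : d ≤ n)
    (V : Matrix (Fin n) (Fin d) ℝ)
    (P : Matrix (Fin n) (Fin d) ℝ) (Q : Matrix (Fin d) (Fin d) ℝ) (σ : Fin d → ℝ)
    (hQ : Qᵀ * Q = 1)
    (hσanti : Antitone σ)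
    (ζ : Fin n → ℝ) (c₁ c₂ : ℝ) (hc₁ : 0 < c₁) (hc₂ : 0 < c₂)
    (h1 : c₁ * Real.sqrt (∑ i, ∑ j, V i j ^ 2) / Real.sqrt d ≤ σ ⟨d - 1, by omega⟩)
    (h2 : (n : ℝ) * d ≤ ∑ i, ∑ j, V i j ^ 2)
    (h3 : ∀ i : Fin d, |∑ j, P j i * ζ j| ≤ c₂ * Real.sqrt (∑ j, ζ j ^ 2) / Real.sqrt n) :
    Real.sqrt (∑ i, ((Q * Matrix.diagonal (fun i => (σ i)⁻¹) * Pᵀ).mulVec ζ) i ^ 2)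
      ≤ (c₂ / c₁) * (Real.sqrt d / n) * Real.sqrt (∑ j, ζ j ^ 2) := by
  have hn : (0 : ℝ) < n := by exact_mod_cast hd.trans_le hdn
  set s := √(∑ j, ζ j ^ 2)
  have hσ_min : c₁ * √n ≤ σ ⟨d - 1, by omega⟩ := by
    calc c₁ * √n = c₁ * √(n * d) / √d := by rw [Real.sqrt_mul hn.le]; field_simp
      _ ≤ c₁ * √(∑ i, ∑ j, V i j ^ 2) / √d := by gcongr
      _ ≤ _ := h1
  have hσ : ∀ i, c₁ * √n ≤ σ i := fun i =>
    hσ_min.trans (hσanti (Fin.le_def.2 (Nat.le_sub_one_of_lt i.2)))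
  have hentry : ∀ i, |(σ i)⁻¹ * ∑ j, P j i * ζ j| ≤ c₂ * s / (c₁ * n) := by
    intro i
    have hpos : 0 < c₁ * √n := by positivity
    calc |(σ i)⁻¹ * ∑ j, P j i * ζ j| = |∑ j, P j i * ζ j| / σ i := by
          rw [abs_mul, abs_inv, abs_of_pos (hpos.trans_le (hσ i)), inv_mul_eq_div]
      _ ≤ c₂ * s / √n / (c₁ * √n) := by gcongr; exacts [h3 i, hσ i]
      _ = c₂ * s / (c₁ * n) := by
          rw [div_div, mul_left_comm, Real.mul_self_sqrt hn.le]
  rw [mul_diagonal_mul_transpose_mulVec, sum_sq_mulVec_of_transpose_mul_self Q hQ]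
  calc _ ≤ √(Fintype.card (Fin d)) * (c₂ * s / (c₁ * n)) :=
        Real.sqrt_sum_sq_le_sqrt_card_mul _ (by positivity) hentry
    _ = c₂ / c₁ * (√d / n) * s := by rw [Fintype.card_fin]; field_simp
end

section
/- For every constant K ≥ 1 there exist constants c > 0 and n₀ depending only on K such that the following holds for all integers n ≥ n₀ and d ≥ 1: if c is uniformly distributed on the unit sphere S^{d−1} of ℝ^d, v ∈ ℝ^d satisfies ‖v‖₂ ≤ K√d, z = ⟨v, c⟩, and t ≥ (log n)^{0.9} is such that P[z ≥ t] ≤ exp(−(K+1)·log² n), then E[exp(z)·1_{z ≥ t}] ≤ exp(−c·(log n)^{1.8}). -/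
/-!
By Cauchy–Schwarz, `E[exp z · 1_{z ≥ t}] ≤ (E[exp (2z)])^{1/2} · P[z ≥ t]^{1/2}`, so it suffices
to bound the exponential moment `E[exp (2z)]` by `3 exp (8K²)` uniformly in `d`; the tail
hypothesis then wins because `(K + 1) log² n` dominates `(log n)^{1.8}`.

For the moment bound write `c = g / ‖g‖` with `g` standard Gaussian. Outside the ball
`‖g‖ < √d / 2`, the normalization only shrinks `⟨v, g⟩` by at most `2 / √d`, so the exponential
moment is controlled by the Gaussian one `E[exp ⟨w, g⟩] = exp (‖w‖² / 2)`. Inside the ball we use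
the trivial bound `exp ‖v‖`, paid for by the Chernoff factor `exp (d / 4 - ‖g‖²)`, whose expectation
is `exp (d / 4) · 3^{-d/2} ≤ exp (-d / 4)`.
-/

open MeasureTheory ProbabilityTheory Real

/-- The standard Gaussian measure `N(0, I_d)` on `ℝ^d`. -/
noncomputable def stdGaussian (d : ℕ) : Measure (EuclideanSpace ℝ (Fin d)) :=
  (Measure.pi fun _ : Fin d => gaussianReal 0 1).map
    (EuclideanSpace.equiv (Fin d) ℝ).symm

/-- The uniform (rotation-invariant) probability distribution on the unit sphere
`S^{d-1}` of `ℝ^d`, realized as the law of `g / ‖g‖` for a standard Gaussian `g`. -/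
noncomputable def uniformSphere (d : ℕ) : Measure (EuclideanSpace ℝ (Fin d)) :=
  (stdGaussian d).map (fun x => ‖x‖⁻¹ • x)

open scoped RealInnerProductSpace

lemma stdGaussian_eq_stdGaussian (d : ℕ) :
    _root_.stdGaussian d = ProbabilityTheory.stdGaussian (EuclideanSpace ℝ (Fin d)) :=
  map_pi_eq_stdGaussian

section Gaussian

variable {E : Type*} [NormedAddCommGroup E] [InnerProductSpace ℝ E] [FiniteDimensional ℝ E]
  [MeasurableSpace E] [BorelSpace E]

lemma map_inner_stdGaussian (v : E) :
    (ProbabilityTheory.stdGaussian E).map (fun x => ⟪v, x⟫)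
      = gaussianReal 0 (‖v‖ ^ 2).toNNReal := by
  have := IsGaussian.map_eq_gaussianReal (μ := ProbabilityTheory.stdGaussian E) (innerSL ℝ v)
  rw [integral_strongDual_stdGaussian, variance_dual_stdGaussian, innerSL_apply_norm] at this
  convert this using 2
  ext x; simp

lemma lintegral_exp_inner_stdGaussian (v : E) :
    ∫⁻ x, ENNReal.ofReal (exp ⟪v, x⟫) ∂(ProbabilityTheory.stdGaussian E)
      = ENNReal.ofReal (exp (‖v‖ ^ 2 / 2)) := by
  have hmap := map_inner_stdGaussian v
  have hint : Integrable (fun x => exp ⟪v, x⟫) (ProbabilityTheory.stdGaussian E) := by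
    have := integrable_exp_mul_gaussianReal (μ := 0) (v := (‖v‖ ^ 2).toNNReal) 1
    rw [← hmap, integrable_map_measure (by fun_prop) (by fun_prop)] at this
    simpa [Function.comp_def] using this
  rw [← ofReal_integral_eq_lintegral_ofReal hint (ae_of_all _ fun x => (exp_pos _).le)]
  have := mgf_gaussianReal hmap 1
  simp only [mgf, one_mul, mul_one, one_pow, zero_add, Real.coe_toNNReal _ (sq_nonneg ‖v‖)] at this
  rw [this]

end Gaussian

lemma integral_exp_neg_sq_gaussianReal : ∫ x, exp (-x ^ 2) ∂(gaussianReal 0 1) = (√3)⁻¹ := by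
  rw [integral_gaussianReal_eq_integral_smul one_ne_zero]
  have h (x : ℝ) :
      gaussianPDFReal 0 1 x • exp (-x ^ 2) = (√(2 * π))⁻¹ * exp (-(3 / 2) * x ^ 2) := by
    simp only [gaussianPDFReal, smul_eq_mul, NNReal.coe_one, mul_one, sub_zero, mul_assoc,
      ← exp_add]
    ring_nf
  simp_rw [h]
  rw [integral_const_mul, integral_gaussian, ← sqrt_inv, ← sqrt_inv, ← sqrt_mul (by positivity)]
  congr 1
  field_simp

lemma lintegral_exp_neg_norm_sq_stdGaussian {ι : Type*} [Fintype ι] :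
    ∫⁻ x, ENNReal.ofReal (exp (-‖x‖ ^ 2)) ∂(ProbabilityTheory.stdGaussian (EuclideanSpace ℝ ι))
      = ENNReal.ofReal ((√3)⁻¹ ^ Fintype.card ι) := by
  have hint : Integrable (fun x : EuclideanSpace ℝ ι => exp (-‖x‖ ^ 2))
      (ProbabilityTheory.stdGaussian (EuclideanSpace ℝ ι)) :=
    Integrable.of_bound (by fun_prop) 1 (ae_of_all _ fun x => by
      simp [abs_of_pos (exp_pos _)])
  rw [← ofReal_integral_eq_lintegral_ofReal hint (ae_of_all _ fun x => (exp_pos _).le),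
    ← map_pi_eq_stdGaussian, integral_map (by fun_prop) (by fun_prop)]
  simp_rw [EuclideanSpace.real_norm_sq_eq, ← Finset.sum_neg_distrib, exp_sum]
  rw [integral_fintype_prod_eq_prod (f := fun _ x => exp (-x ^ 2))]
  simp [integral_exp_neg_sq_gaussianReal]

lemma exp_add_div_four_mul_inv_sqrt_three_pow_le {d : ℕ} (hd : 0 < d) (a : ℝ) :
    exp (a + d / 4) * (√3)⁻¹ ^ d ≤ exp (a ^ 2 / d) := by
  have hd' : (0 : ℝ) < d := by exact_mod_cast hd
  have hsqrt3 : (√3)⁻¹ ≤ exp (-(1 / 2)) := by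
    rw [exp_neg]
    refine inv_anti₀ (exp_pos _) ((le_sqrt (exp_pos _).le (by norm_num)).2 ?_)
    rw [← exp_nat_mul]
    norm_num
    linarith [exp_one_lt_d9]
  calc exp (a + d / 4) * (√3)⁻¹ ^ d ≤ exp (a + d / 4) * exp (-(1 / 2)) ^ d := by gcongr
    _ = exp (a - d / 4) := by
      rw [← exp_nat_mul, ← exp_add]
      ring_nf
    _ ≤ exp (a ^ 2 / d) := by
      rw [exp_le_exp, le_div_iff₀ hd']
      nlinarith [sq_nonneg (a - d / 2)]

lemma exp_inner_inv_norm_smul_le {F : Type*} [NormedAddCommGroup F] [InnerProductSpace ℝ F]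
    (v x : F) {r : ℝ} (hr : 0 < r) :
    exp ⟪v, ‖x‖⁻¹ • x⟫
      ≤ exp ⟪r⁻¹ • v, x⟫ + exp ⟪-(r⁻¹ • v), x⟫ + exp (‖v‖ + r ^ 2) * exp (-‖x‖ ^ 2) := by
  have h₁ := exp_pos ⟪r⁻¹ • v, x⟫
  have h₂ := exp_pos ⟪-(r⁻¹ • v), x⟫
  have h₃ := mul_pos (exp_pos (‖v‖ + r ^ 2)) (exp_pos (-‖x‖ ^ 2))
  rcases le_or_gt r ‖x‖ with hx | hx
  · have hle : ⟪v, ‖x‖⁻¹ • x⟫ ≤ |⟪r⁻¹ • v, x⟫| := by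
      rw [real_inner_smul_right, real_inner_smul_left, abs_mul, abs_inv, abs_of_pos hr]
      calc ‖x‖⁻¹ * ⟪v, x⟫ ≤ ‖x‖⁻¹ * |⟪v, x⟫| :=
            mul_le_mul_of_nonneg_left (le_abs_self _) (by positivity)
        _ ≤ r⁻¹ * |⟪v, x⟫| := mul_le_mul_of_nonneg_right (inv_anti₀ hr hx) (abs_nonneg _)
    have := (exp_le_exp.2 hle).trans (exp_abs_le _)
    rw [← inner_neg_left] at this
    linarith
  · have hle : ⟪v, ‖x‖⁻¹ • x⟫ ≤ ‖v‖ + r ^ 2 + -‖x‖ ^ 2 := by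
      have hunit : ‖‖x‖⁻¹ • x‖ ≤ 1 := by
        rcases eq_or_ne x 0 with rfl | hx0
        · simp
        · exact (norm_smul_inv_norm hx0).le
      have := (real_inner_le_norm v _).trans (mul_le_of_le_one_right (norm_nonneg v) hunit)
      nlinarith [norm_nonneg x]
    have := exp_le_exp.2 hle
    rw [exp_add] at this
    linarith

lemma lintegral_exp_inner_uniformSphere_le {d : ℕ} (hd : 0 < d) (v : EuclideanSpace ℝ (Fin d)) :
    ∫⁻ y, ENNReal.ofReal (exp ⟪v, y⟫) ∂(uniformSphere d)
      ≤ ENNReal.ofReal (3 * exp (2 * ‖v‖ ^ 2 / d)) := by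
  set r := √d / 2 with hr_def
  have hr : 0 < r := by positivity
  have hr2 : r ^ 2 = d / 4 := by rw [hr_def, div_pow, sq_sqrt d.cast_nonneg]; norm_num
  rw [uniformSphere, lintegral_map (by fun_prop) (by fun_prop), stdGaussian_eq_stdGaussian]
  calc _ ≤ ∫⁻ x, ENNReal.ofReal (exp ⟪r⁻¹ • v, x⟫) + ENNReal.ofReal (exp ⟪-(r⁻¹ • v), x⟫)
          + ENNReal.ofReal (exp (‖v‖ + r ^ 2)) * ENNReal.ofReal (exp (-‖x‖ ^ 2))
          ∂(ProbabilityTheory.stdGaussian _) := by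
        refine lintegral_mono fun x => ?_
        rw [← ENNReal.ofReal_add (exp_pos _).le (exp_pos _).le, ← ENNReal.ofReal_mul (exp_pos _).le,
          ← ENNReal.ofReal_add (by positivity) (by positivity)]
        exact ENNReal.ofReal_le_ofReal (exp_inner_inv_norm_smul_le v x hr)
    _ = ENNReal.ofReal (exp (‖r⁻¹ • v‖ ^ 2 / 2)) + ENNReal.ofReal (exp (‖-(r⁻¹ • v)‖ ^ 2 / 2))
          + ENNReal.ofReal (exp (‖v‖ + r ^ 2)) * ENNReal.ofReal ((√3)⁻¹ ^ d) := by
        rw [lintegral_add_left (by fun_prop), lintegral_add_left (by fun_prop),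
          lintegral_const_mul _ (by fun_prop), lintegral_exp_inner_stdGaussian,
          lintegral_exp_inner_stdGaussian, lintegral_exp_neg_norm_sq_stdGaussian, Fintype.card_fin]
    _ ≤ ENNReal.ofReal (3 * exp (2 * ‖v‖ ^ 2 / d)) := by
        have hd' : (0 : ℝ) < d := by exact_mod_cast hd
        have hgauss : ‖r⁻¹ • v‖ ^ 2 / 2 = 2 * ‖v‖ ^ 2 / d := by
          rw [norm_smul, mul_pow, norm_inv, Real.norm_of_nonneg hr.le, inv_pow, hr2]
          field_simp
          ring
        have hball : exp (‖v‖ + r ^ 2) * (√3)⁻¹ ^ d ≤ exp (2 * ‖v‖ ^ 2 / d) := by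
          rw [hr2]
          refine (exp_add_div_four_mul_inv_sqrt_three_pow_le hd ‖v‖).trans (exp_le_exp.2 ?_)
          gcongr
          linarith [sq_nonneg ‖v‖]
        rw [norm_neg, hgauss, ← ENNReal.ofReal_mul (exp_pos _).le,
          ← ENNReal.ofReal_add (exp_pos _).le (exp_pos _).le,
          ← ENNReal.ofReal_add (by positivity) (by positivity)]
        exact ENNReal.ofReal_le_ofReal (by linarith)

lemma lintegral_ofReal_exp_inner_sq_uniformSphere_le {d : ℕ} (hd : 0 < d) {K : ℝ}
    {v : EuclideanSpace ℝ (Fin d)} (hv : ‖v‖ ≤ K * √d) :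
    ∫⁻ x, ENNReal.ofReal (exp ⟪v, x⟫) ^ 2 ∂(uniformSphere d)
      ≤ ENNReal.ofReal (3 * exp (8 * K ^ 2)) := by
  have hd' : (0 : ℝ) < d := by exact_mod_cast hd
  calc ∫⁻ x, ENNReal.ofReal (exp ⟪v, x⟫) ^ 2 ∂(uniformSphere d)
      = ∫⁻ x, ENNReal.ofReal (exp ⟪(2 : ℝ) • v, x⟫) ∂(uniformSphere d) := by
        refine lintegral_congr fun x => ?_
        rw [← ENNReal.ofReal_pow (exp_pos _).le, ← exp_nat_mul, real_inner_smul_left]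
        norm_num
    _ ≤ ENNReal.ofReal (3 * exp (2 * ‖(2 : ℝ) • v‖ ^ 2 / d)) :=
        lintegral_exp_inner_uniformSphere_le hd _
    _ ≤ ENNReal.ofReal (3 * exp (8 * K ^ 2)) := by
        gcongr
        rw [norm_smul, Real.norm_two, div_le_iff₀ hd']
        nlinarith [sq_sqrt hd'.le, norm_nonneg v, mul_self_le_mul_self (norm_nonneg v) hv]

lemma setLIntegral_sq_le_lintegral_sq_mul_measure {α : Type*} [MeasurableSpace α]
    {μ : Measure α} {f : α → ENNReal} (hf : AEMeasurable f μ) (s : Set α) :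
    (∫⁻ x in s, f x ∂μ) ^ 2 ≤ (∫⁻ x, f x ^ 2 ∂μ) * μ s := by
  have hCS := ENNReal.lintegral_mul_le_Lp_mul_Lq (μ.restrict s) Real.HolderConjugate.two_two
    hf.restrict aemeasurable_const (f := f) (g := 1)
  simp only [Pi.mul_apply, Pi.one_apply, mul_one, one_pow, lintegral_one,
    Measure.restrict_apply_univ, ENNReal.rpow_two] at hCS
  calc (∫⁻ x in s, f x ∂μ) ^ 2
      ≤ ((∫⁻ x in s, f x ^ 2 ∂μ) ^ (1 / 2 : ℝ) * μ s ^ (1 / 2 : ℝ)) ^ 2 := by gcongr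
    _ = (∫⁻ x in s, f x ^ 2 ∂μ) * μ s := by
        rw [mul_pow, ← ENNReal.rpow_natCast, ← ENNReal.rpow_natCast, ← ENNReal.rpow_mul,
          ← ENNReal.rpow_mul]
        norm_num
    _ ≤ (∫⁻ x, f x ^ 2 ∂μ) * μ s := by
        gcongr
        exact Measure.restrict_le_self

lemma three_mul_exp_mul_exp_le {K L : ℝ} (hK : 1 ≤ K) (hL : 8 * K ^ 2 + 2 ≤ L) :
    3 * exp (8 * K ^ 2) * exp (-(K + 1) * L ^ 2) ≤ exp (-L ^ (1.8 : ℝ)) := by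
  have hL1 : 1 ≤ L := by nlinarith
  have h3 : (3 : ℝ) ≤ exp 2 := by linarith [add_one_le_exp (2 : ℝ)]
  have hpow : L ^ (1.8 : ℝ) ≤ L ^ 2 := by
    exact_mod_cast rpow_le_rpow_of_exponent_le hL1 (by norm_num : (1.8 : ℝ) ≤ 2)
  calc 3 * exp (8 * K ^ 2) * exp (-(K + 1) * L ^ 2)
      ≤ exp 2 * exp (8 * K ^ 2) * exp (-(K + 1) * L ^ 2) := by gcongr
    _ = exp (8 * K ^ 2 + 2 - (K + 1) * L ^ 2) := by rw [← exp_add, ← exp_add]; ring_nf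
    _ ≤ exp (-L ^ (1.8 : ℝ)) := by
      gcongr
      nlinarith

/-- Corollary A.3: for every `K ≥ 1` there are constants `c > 0` and `n₀`
depending only on `K` such that for all `n ≥ n₀`, `d ≥ 1`, `v` with
`‖v‖₂ ≤ K √d`, and `t ≥ (log n)^{0.9}` with `P[z ≥ t] ≤ exp (-(K+1) log² n)`
(where `z = ⟨v, c⟩`, `c` uniform on `S^{d-1}`), one has
`E[exp z · 1_{z ≥ t}] ≤ exp (-c (log n)^{1.8})`. -/
theorem stmt10 :
    ∀ K : ℝ, 1 ≤ K → ∃ c : ℝ, ∃ n₀ : ℕ, 0 < c ∧ 0 < n₀ ∧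
      ∀ n : ℕ, n₀ ≤ n → ∀ d : ℕ, 1 ≤ d →
        ∀ v : EuclideanSpace ℝ (Fin d), ‖v‖ ≤ K * Real.sqrt d →
          ∀ t : ℝ, (Real.log n) ^ (0.9 : ℝ) ≤ t →
            uniformSphere d {y | t ≤ (inner ℝ v y : ℝ)}
              ≤ ENNReal.ofReal (Real.exp (-(K + 1) * (Real.log n) ^ 2)) →
            ∫ x, Set.indicator {y : EuclideanSpace ℝ (Fin d) | t ≤ (inner ℝ v y : ℝ)}
                (fun y => Real.exp (inner ℝ v y)) x ∂(uniformSphere d)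
              ≤ Real.exp (-c * (Real.log n) ^ (1.8 : ℝ)) := by
  intro K hK
  refine ⟨1 / 2, ⌈exp (8 * K ^ 2 + 2)⌉₊ + 1, by norm_num, by positivity, ?_⟩
  intro n hn d hd v hv t _ hS
  have hL : 8 * K ^ 2 + 2 ≤ log n := by
    rw [le_log_iff_exp_le (by norm_cast; omega)]
    exact (Nat.le_ceil _).trans (by exact_mod_cast (Nat.le_succ _).trans hn)
  rw [integral_indicator (measurableSet_le (by fun_prop) (by fun_prop)),
    integral_eq_lintegral_of_nonneg_ae (ae_of_all _ fun _ => (exp_pos _).le) (by fun_prop)]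
  refine ENNReal.toReal_le_of_le_ofReal (exp_pos _).le
    ((ENNReal.pow_le_pow_left_iff two_ne_zero).1 ?_)
  calc (∫⁻ x in {y | t ≤ ⟪v, y⟫}, ENNReal.ofReal (exp ⟪v, x⟫) ∂(uniformSphere d)) ^ 2
      ≤ ENNReal.ofReal (3 * exp (8 * K ^ 2)) * ENNReal.ofReal (exp (-(K + 1) * log n ^ 2)) :=
        (setLIntegral_sq_le_lintegral_sq_mul_measure (by fun_prop) _).trans
          (by gcongr; exact lintegral_ofReal_exp_inner_sq_uniformSphere_le hd hv)
    _ ≤ ENNReal.ofReal (exp (-log n ^ (1.8 : ℝ))) := by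
        rw [← ENNReal.ofReal_mul (by positivity)]
        exact ENNReal.ofReal_le_ofReal (three_mul_exp_mul_exp_le hK hL)
    _ = ENNReal.ofReal (exp (-(1 / 2) * log n ^ (1.8 : ℝ))) ^ 2 := by
        rw [← ENNReal.ofReal_pow (exp_pos _).le, ← exp_nat_mul]
        ring_nf
end

section
/- Let X be a real random variable admitting a probability density with respect to Lebesgue measure. Let r: ℝ → [0,1] be a measurable function with E[r(X)] = ρ, and let u: ℝ → ℝ be a nondecreasing function with E[|u(X)|] < ∞. Let t ∈ ℝ be such that P[X ≥ t] = ρ. Then E[u(X)·r(X)] ≤ E[u(X)·1_{X ≥ t}], where 1_{X ≥ t} is the indicator of the event {X ≥ t}. -/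
open MeasureTheory Set

/-! Pushing forward along `X`, it suffices to work with a finite measure `μ` on `ℝ`.
Write `1ₜ` for the indicator of `[t, ∞)`. Since `u` is nondecreasing, `(u x - u t) (1ₜ x - r x) ≥ 0`
pointwise: for `x ≥ t` both factors are nonnegative, for `x < t` both are nonpositive. Integrating
against `μ`, `∫ u (1ₜ - r) ≥ u t ∫ (1ₜ - r) = 0`, because `1ₜ` and `r` have the same mass. -/

lemma mul_sub_le_mul_indicator_Ici_sub {u : ℝ → ℝ} (hu : Monotone u) {t x w : ℝ}
    (hw : w ∈ Icc (0 : ℝ) 1) :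
    u t * ((Ici t).indicator (fun _ => 1) x - w) ≤ u x * ((Ici t).indicator (fun _ => 1) x - w) := by
  rcases le_or_gt t x with htx | hxt
  · rw [indicator_of_mem (mem_Ici.mpr htx)]
    exact mul_le_mul_of_nonneg_right (hu htx) (sub_nonneg.mpr hw.2)
  · rw [indicator_of_notMem (notMem_Ici.mpr hxt)]
    exact mul_le_mul_of_nonpos_right (hu hxt.le) (by linarith [hw.1])

theorem integral_mul_le_integral_mul_indicator_Ici {μ : Measure ℝ} [IsFiniteMeasure μ]
    {u r : ℝ → ℝ} {t : ℝ} (hu : Monotone u) (hui : Integrable u μ)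
    (hr : AEStronglyMeasurable r μ) (hr01 : ∀ x, r x ∈ Icc (0 : ℝ) 1)
    (hmass : ∫ x, r x ∂μ = μ.real (Ici t)) :
    ∫ x, u x * r x ∂μ ≤ ∫ x, u x * (Ici t).indicator (fun _ => 1) x ∂μ := by
  set ind : ℝ → ℝ := (Ici t).indicator (fun _ => 1)
  have hr_bound : ∀ᵐ x ∂μ, ‖r x‖ ≤ 1 :=
    ae_of_all _ fun x => by rw [Real.norm_of_nonneg (hr01 x).1]; exact (hr01 x).2
  have hind_bound : ∀ᵐ x ∂μ, ‖ind x‖ ≤ 1 :=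
    ae_of_all _ fun x => norm_indicator_le_norm_self _ x |>.trans_eq norm_one
  have hind_int : Integrable ind μ := (integrable_const 1).indicator measurableSet_Ici
  have hr_int : Integrable r μ := .of_bound hr 1 hr_bound
  have hur_int : Integrable (fun x => u x * r x) μ := hui.mul_bdd hr hr_bound
  have huind_int : Integrable (fun x => u x * ind x) μ :=
    hui.mul_bdd hind_int.aestronglyMeasurable hind_bound
  have hbalance : ∫ x, u t * (ind x - r x) ∂μ = 0 := by
    rw [integral_const_mul, integral_sub hind_int hr_int, hmass,
      integral_indicator_const _ measurableSet_Ici, smul_eq_mul, mul_one, sub_self, mul_zero]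
  have hgain : ∫ x, u t * (ind x - r x) ∂μ ≤ ∫ x, u x * (ind x - r x) ∂μ :=
    integral_mono ((hind_int.sub hr_int).const_mul _)
      ((huind_int.sub hur_int).congr (ae_of_all _ fun x => by simp only [Pi.sub_apply]; ring))
      fun x => mul_sub_le_mul_indicator_Ici_sub hu (hr01 x)
  have hsplit : ∫ x, u x * (ind x - r x) ∂μ = ∫ x, u x * ind x ∂μ - ∫ x, u x * r x ∂μ := by
    rw [← integral_sub huind_int hur_int]
    simp only [mul_sub]
  linarith

theorem stmt11_general {Ω : Type*} [MeasurableSpace Ω] (P : Measure Ω) [IsProbabilityMeasure P]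
    (X : Ω → ℝ) (hX : Measurable X)
    (r : ℝ → ℝ) (hr : Measurable r) (hr01 : ∀ x, r x ∈ Set.Icc (0 : ℝ) 1)
    (ρ : ℝ) (hρ : ∫ ω, r (X ω) ∂P = ρ)
    (u : ℝ → ℝ) (hu : Monotone u) (hui : Integrable (fun ω => |u (X ω)|) P)
    (t : ℝ) (ht : P {ω | t ≤ X ω} = ENNReal.ofReal ρ) :
    ∫ ω, u (X ω) * r (X ω) ∂P
      ≤ ∫ ω, u (X ω) * Set.indicator (Set.Ici t) (fun _ => (1 : ℝ)) (X ω) ∂P := by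
  have hρ_nonneg : 0 ≤ ρ := hρ ▸ integral_nonneg fun ω => (hr01 (X ω)).1
  have hui_map : Integrable u (P.map X) :=
    (integrable_map_measure hu.measurable.aestronglyMeasurable hX.aemeasurable).mpr <|
      (integrable_norm_iff (hu.measurable.comp hX).aestronglyMeasurable).mp <| by
        simpa only [Real.norm_eq_abs, Function.comp_def] using hui
  have hmass : ∫ x, r x ∂P.map X = (P.map X).real (Ici t) := by
    rw [integral_map hX.aemeasurable hr.aestronglyMeasurable, hρ,
      map_measureReal_apply hX measurableSet_Ici, measureReal_def]
    change ρ = (P {ω | t ≤ X ω}).toReal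
    rw [ht, ENNReal.toReal_ofReal hρ_nonneg]
  have hind : Measurable ((Ici t).indicator fun _ => (1 : ℝ)) :=
    measurable_const.indicator measurableSet_Ici
  have key := integral_mul_le_integral_mul_indicator_Ici hu hui_map
    hr.aestronglyMeasurable hr01 hmass
  rwa [integral_map (f := fun x => u x * r x) hX.aemeasurable
      (hu.measurable.mul hr).aestronglyMeasurable,
    integral_map (f := fun x => u x * (Ici t).indicator (fun _ => 1) x) hX.aemeasurable
      (hu.measurable.mul hind).aestronglyMeasurable] at key

/-- Lemma A.4 (continuous Abel's inequality): if `X` has a density with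
respect to Lebesgue measure, `r : ℝ → [0,1]` is measurable with
`E[r(X)] = ρ`, `u` is nondecreasing with `E[|u(X)|] < ∞`, and `t` satisfies
`P[X ≥ t] = ρ`, then `E[u(X) r(X)] ≤ E[u(X) 1_{X ≥ t}]`. -/
theorem stmt11 {Ω : Type*} [MeasurableSpace Ω] (P : Measure Ω) [IsProbabilityMeasure P]
    (X : Ω → ℝ) (hX : Measurable X) (hac : P.map X ≪ volume)
    (r : ℝ → ℝ) (hr : Measurable r) (hr01 : ∀ x, r x ∈ Set.Icc (0 : ℝ) 1)
    (ρ : ℝ) (hρ : ∫ ω, r (X ω) ∂P = ρ)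
    (u : ℝ → ℝ) (hu : Monotone u) (hui : Integrable (fun ω => |u (X ω)|) P)
    (t : ℝ) (ht : P {ω | t ≤ X ω} = ENNReal.ofReal ρ) :
    ∫ ω, u (X ω) * r (X ω) ∂P
      ≤ ∫ ω, u (X ω) * Set.indicator (Set.Ici t) (fun _ => (1 : ℝ)) (X ω) ∂P :=
  stmt11_general P X hX r hr hr01 ρ hρ u hu hui t ht
end

section
/- Let κ ≥ 1, d ≥ 1, 0 ≤ ε₂ ≤ 1/2, and let c ∈ ℝ^d be fixed. Let c′ be a random vector in ℝ^d satisfying E[exp(κ√d·‖c′ − c‖₂)] ≤ 1 + ε₂. Then for every v ∈ ℝ^d with ‖v‖₂ ≤ κ√d: (1 − ε₂)·exp(⟨v, c⟩) ≤ E[exp(⟨v, c′⟩)] ≤ (1 + ε₂)·exp(⟨v, c⟩). -/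
/-!
Write `c' = c + (c' - c)`. By Cauchy–Schwarz `|⟨v, c' - c⟩| ≤ κ √d ‖c' - c‖ =: s`, so
`exp ⟨v, c'⟩` lies between `exp ⟨v, c⟩ (2 - exp s)` and `exp ⟨v, c⟩ exp s`; the lower
bound is `exp t + exp (-t) ≥ 2`. Integrating and using `E[exp s] ≤ 1 + ε₂` gives both bounds.
-/

open MeasureTheory ProbabilityTheory

namespace Real

theorem two_sub_exp_neg_le_exp (t : ℝ) : 2 - exp (-t) ≤ exp t := by
  have h := one_le_cosh t
  rw [cosh_eq] at h
  linarith

end Real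

section InnerProductSpace

variable {E : Type*} [NormedAddCommGroup E] [InnerProductSpace ℝ E] {K : ℝ} {v : E}

theorem abs_inner_le_mul_norm_of_norm_le (hv : ‖v‖ ≤ K) (w : E) :
    |inner ℝ v w| ≤ K * ‖w‖ :=
  (abs_real_inner_le_norm v w).trans (by gcongr)

theorem exp_inner_eq_mul_exp_inner_sub (x y : E) :
    Real.exp (inner ℝ v y) = Real.exp (inner ℝ v x) * Real.exp (inner ℝ v (y - x)) := by
  rw [← Real.exp_add, ← inner_add_right, add_sub_cancel]

theorem exp_inner_le_mul_exp_norm_sub (hv : ‖v‖ ≤ K) (x y : E) :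
    Real.exp (inner ℝ v y) ≤ Real.exp (inner ℝ v x) * Real.exp (K * ‖y - x‖) := by
  rw [exp_inner_eq_mul_exp_inner_sub x y]
  gcongr
  exact (le_abs_self _).trans (abs_inner_le_mul_norm_of_norm_le hv _)

theorem mul_two_sub_exp_norm_sub_le_exp_inner (hv : ‖v‖ ≤ K) (x y : E) :
    Real.exp (inner ℝ v x) * (2 - Real.exp (K * ‖y - x‖)) ≤ Real.exp (inner ℝ v y) := by
  rw [exp_inner_eq_mul_exp_inner_sub x y]
  gcongr
  have hneg : Real.exp (-inner ℝ v (y - x)) ≤ Real.exp (K * ‖y - x‖) :=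
    Real.exp_le_exp.mpr ((neg_le_abs _).trans (abs_inner_le_mul_norm_of_norm_le hv _))
  linarith [Real.two_sub_exp_neg_le_exp (inner ℝ v (y - x))]

variable {Ω : Type*} [MeasurableSpace Ω] {P : Measure Ω} [MeasurableSpace E]
  {c : E} {c' : Ω → E}

theorem integrable_exp_inner_of_integrable_exp_norm_sub [OpensMeasurableSpace E]
    (hv : ‖v‖ ≤ K) (hmeas : AEMeasurable c' P)
    (hint : Integrable (fun ω => Real.exp (K * ‖c' ω - c‖)) P) :
    Integrable (fun ω => Real.exp (inner ℝ v (c' ω))) P := by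
  refine (hint.const_mul (Real.exp (inner ℝ v c))).mono' ?_ (.of_forall fun ω => ?_)
  · have hcont : Continuous fun x : E => Real.exp (inner ℝ v x) := by fun_prop
    exact (hcont.measurable.comp_aemeasurable hmeas).aestronglyMeasurable
  · rw [Real.norm_of_nonneg (Real.exp_nonneg _)]
    exact exp_inner_le_mul_exp_norm_sub hv c (c' ω)

theorem integral_exp_inner_le [OpensMeasurableSpace E] (hv : ‖v‖ ≤ K)
    (hmeas : AEMeasurable c' P) (hint : Integrable (fun ω => Real.exp (K * ‖c' ω - c‖)) P) :
    ∫ ω, Real.exp (inner ℝ v (c' ω)) ∂P ≤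
      Real.exp (inner ℝ v c) * ∫ ω, Real.exp (K * ‖c' ω - c‖) ∂P := by
  rw [← integral_const_mul]
  exact integral_mono (integrable_exp_inner_of_integrable_exp_norm_sub hv hmeas hint)
    (hint.const_mul _) fun ω => exp_inner_le_mul_exp_norm_sub hv c (c' ω)

theorem le_integral_exp_inner [OpensMeasurableSpace E] [IsProbabilityMeasure P] (hv : ‖v‖ ≤ K)
    (hmeas : AEMeasurable c' P) (hint : Integrable (fun ω => Real.exp (K * ‖c' ω - c‖)) P) :
    Real.exp (inner ℝ v c) * (2 - ∫ ω, Real.exp (K * ‖c' ω - c‖) ∂P) ≤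
      ∫ ω, Real.exp (inner ℝ v (c' ω)) ∂P := by
  calc Real.exp (inner ℝ v c) * (2 - ∫ ω, Real.exp (K * ‖c' ω - c‖) ∂P)
      = ∫ ω, Real.exp (inner ℝ v c) * (2 - Real.exp (K * ‖c' ω - c‖)) ∂P := by
        rw [integral_const_mul, integral_sub (integrable_const 2) hint, integral_const,
          probReal_univ, one_smul]
    _ ≤ ∫ ω, Real.exp (inner ℝ v (c' ω)) ∂P :=
        integral_mono (((integrable_const 2).sub hint).const_mul _)
          (integrable_exp_inner_of_integrable_exp_norm_sub hv hmeas hint)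
          fun ω => mul_two_sub_exp_norm_sub_le_exp_inner hv c (c' ω)

end InnerProductSpace

theorem stmt17_general {Ω : Type*} [MeasurableSpace Ω] (P : Measure Ω) [IsProbabilityMeasure P]
    (κ : ℝ) (d : ℕ) (ε₂ : ℝ)
    (c : EuclideanSpace ℝ (Fin d)) (c' : Ω → EuclideanSpace ℝ (Fin d))
    (hmeas : AEMeasurable c' P)
    (hint : Integrable (fun ω => Real.exp (κ * Real.sqrt d * ‖c' ω - c‖)) P)
    (hbound : ∫ ω, Real.exp (κ * Real.sqrt d * ‖c' ω - c‖) ∂P ≤ 1 + ε₂) :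
    ∀ v : EuclideanSpace ℝ (Fin d), ‖v‖ ≤ κ * Real.sqrt d →
      (1 - ε₂) * Real.exp (inner ℝ v c) ≤ ∫ ω, Real.exp (inner ℝ v (c' ω)) ∂P ∧
      ∫ ω, Real.exp (inner ℝ v (c' ω)) ∂P ≤ (1 + ε₂) * Real.exp (inner ℝ v c) := by
  intro v hv
  have hexp := Real.exp_pos (inner ℝ v c)
  set M := ∫ ω, Real.exp (κ * Real.sqrt d * ‖c' ω - c‖) ∂P
  constructor
  · calc (1 - ε₂) * Real.exp (inner ℝ v c) ≤ Real.exp (inner ℝ v c) * (2 - M) := by nlinarith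
      _ ≤ _ := le_integral_exp_inner hv hmeas hint
  · calc ∫ ω, Real.exp (inner ℝ v (c' ω)) ∂P
        ≤ Real.exp (inner ℝ v c) * M :=
          integral_exp_inner_le hv hmeas hint
      _ ≤ (1 + ε₂) * Real.exp (inner ℝ v c) := by nlinarith

/-- The slow-random-walk estimate of the main theorem: if the random vector
`c'` satisfies `E[exp (κ √d ‖c' - c‖₂)] ≤ 1 + ε₂` with `0 ≤ ε₂ ≤ 1/2`, then
for every `v` with `‖v‖₂ ≤ κ √d`,
`(1 - ε₂) exp ⟨v, c⟩ ≤ E[exp ⟨v, c'⟩] ≤ (1 + ε₂) exp ⟨v, c⟩`. -/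
theorem stmt17 {Ω : Type*} [MeasurableSpace Ω] (P : Measure Ω) [IsProbabilityMeasure P]
    (κ : ℝ) (hκ : 1 ≤ κ) (d : ℕ) (hd : 1 ≤ d) (ε₂ : ℝ) (hε₂ : 0 ≤ ε₂) (hε₂' : ε₂ ≤ 1 / 2)
    (c : EuclideanSpace ℝ (Fin d)) (c' : Ω → EuclideanSpace ℝ (Fin d))
    (hmeas : AEMeasurable c' P)
    (hint : Integrable (fun ω => Real.exp (κ * Real.sqrt d * ‖c' ω - c‖)) P)
    (hbound : ∫ ω, Real.exp (κ * Real.sqrt d * ‖c' ω - c‖) ∂P ≤ 1 + ε₂) :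
    ∀ v : EuclideanSpace ℝ (Fin d), ‖v‖ ≤ κ * Real.sqrt d →
      (1 - ε₂) * Real.exp (inner ℝ v c) ≤ ∫ ω, Real.exp (inner ℝ v (c' ω)) ∂P ∧
      ∫ ω, Real.exp (inner ℝ v (c' ω)) ∂P ≤ (1 + ε₂) * Real.exp (inner ℝ v c) :=
  stmt17_general P κ d ε₂ c c' hmeas hint hbound
end
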